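/- arXiv:1204.5052 — 3 statements merged into one kernel-verified Lean document; each statement's English description precedes it below -/
import Mathlib

section
/- Lanczos restart recovery (Theorem 4.2): let A V_{m+k} = V_{m+k+1} T̄_{m+k} be the primary Lanczos relation, and let A V^{rr}_k = V^{rr}_{k+1} T̄^{rr}_k be the restarted Lanczos relation with starting vector v^{rr}_1 = v_{m+1}. Assume m+1 > k and let T̂_{2k+1} be the trailing (2k+1)×(2k+1) principal submatrix of T_{m+k+1} (rows/columns m+1−k through m+1+k). Then the tridiagonal matrix produced by k steps of the Lanczos process for T̂_{2k+1} with starting vector e_{k+1} ∈ ℂ^{2k+1} equals T̄^{rr}_k. -/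
/-!
An Arnoldi relation `M X₍:k₎ = X S̄` with orthonormal `X` and positive subdiagonal is determined
by its first column (implicit Q theorem): the columns of `X` are recovered one at a time, the
subdiagonal entry of `S̄` being the length of the residual.

Since `T̄` is tridiagonal, the `j`-th Lanczos vector of `T̂` started at `e_{k+1}` is supported
within distance `j` of the centre of the window, so for `j < k` it vanishes at both ends. On such
vectors `A (V_win x) = V_win (T̂ x)`, hence `V_win U` is a Lanczos basis for `A` started at
`v_{m+1}`, and uniqueness identifies the two tridiagonal matrices.
-/

open Matrix

section General

variable {ι : Type*} [Fintype ι]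

lemma conjTranspose_mul_mul_submatrix_eq {κ μ : Type*} [Fintype κ] [DecidableEq κ]
    {M : Matrix ι ι ℂ} {X : Matrix ι κ ℂ} {f : μ → κ} {S : Matrix κ μ ℂ}
    (hX : Xᴴ * X = 1) (h : M * X.submatrix id f = X * S) :
    Xᴴ * M * X.submatrix id f = S := by
  rw [Matrix.mul_assoc, h, ← Matrix.mul_assoc, hX, Matrix.one_mul]

lemma eq_of_ofReal_smul_eq_ofReal_smul {x y : ι → ℂ} {s t : ℝ} (hs : 0 < s) (ht : 0 < t)
    (hx : star x ⬝ᵥ x = 1) (hy : star y ⬝ᵥ y = 1) (h : (s : ℂ) • x = (t : ℂ) • y) : x = y := by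
  have hsq : ((s ^ 2 : ℝ) : ℂ) = ((t ^ 2 : ℝ) : ℂ) := by
    have := congrArg (fun z => star z ⬝ᵥ z) h
    simpa [star_smul, dotProduct_smul, smul_dotProduct, hx, hy, sq] using this
  have hst : s = t := (sq_eq_sq₀ hs.le ht.le).1 (Complex.ofReal_injective hsq)
  subst hst
  exact smul_right_injective _ (Complex.ofReal_ne_zero.2 hs.ne') h

/-- The relation `M X₍:k₎ = X S̄` of `k` Arnoldi steps; the Lanczos relations are the case of a
tridiagonal `S̄`. -/
structure IsArnoldi {k : ℕ} (M : Matrix ι ι ℂ) (X : Matrix ι (Fin (k + 1)) ℂ)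
    (S : Matrix (Fin (k + 1)) (Fin k) ℝ) : Prop where
  orthonormal : Xᴴ * X = 1
  hessenberg : ∀ (i : Fin (k + 1)) (j : Fin k), (j : ℕ) + 1 < i → S i j = 0
  subdiag_pos : ∀ j, 0 < S j.succ j
  rel : M * X.submatrix id Fin.castSucc = X * S.map (fun x => (x : ℂ))

namespace IsArnoldi

variable {k : ℕ} {M : Matrix ι ι ℂ} {X Y : Matrix ι (Fin (k + 1)) ℂ}
  {S R : Matrix (Fin (k + 1)) (Fin k) ℝ}

lemma star_col_dotProduct_col (h : IsArnoldi M X S) (a : Fin (k + 1)) :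
    star (Xᵀ a) ⬝ᵥ Xᵀ a = 1 := by
  simpa [mul_apply, dotProduct] using congrFun₂ h.orthonormal a a

lemma entry_eq (h : IsArnoldi M X S) (a : Fin (k + 1)) (c : Fin k) :
    (S a c : ℂ) = star (Xᵀ a) ⬝ᵥ (M *ᵥ Xᵀ c.castSucc) := by
  have := congrFun₂ (conjTranspose_mul_mul_submatrix_eq h.orthonormal h.rel) a c
  simp only [Matrix.mul_assoc, map_apply] at this
  rw [← this]
  simp [mul_apply, dotProduct, mulVec]

lemma mulVec_col (h : IsArnoldi M X S) (c : Fin k) :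
    M *ᵥ Xᵀ c.castSucc = ∑ a, (S a c : ℂ) • Xᵀ a := by
  funext i
  calc (M *ᵥ Xᵀ c.castSucc) i = (M * X.submatrix id Fin.castSucc) i c := rfl
    _ = (X * S.map (fun x => (x : ℂ))) i c := by rw [h.rel]
    _ = _ := by simp [mul_apply, mul_comm]

theorem eq_of_col_zero_eq (hX : IsArnoldi M X S) (hY : IsArnoldi M Y R)
    (h0 : Xᵀ 0 = Yᵀ 0) : X = Y := by
  suffices ∀ c, Xᵀ c = Yᵀ c by ext r c; exact congrFun (this c) r
  intro c
  induction c using WellFoundedLT.induction with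
  | _ c ih =>
  obtain rfl | ⟨c, rfl⟩ := Fin.eq_zero_or_eq_succ c
  · exact h0
  have hprev : ∀ a ≤ c.castSucc, Xᵀ a = Yᵀ a :=
    fun a ha => ih a (ha.trans_lt Fin.castSucc_lt_succ)
  have hcoef : ∀ a ≠ c.succ, (S a c : ℂ) • Xᵀ a = (R a c : ℂ) • Yᵀ a := by
    intro a ha
    rcases le_or_gt a c.castSucc with hle | hlt
    · rw [hX.entry_eq, hY.entry_eq, hprev a hle, hprev _ le_rfl]
    · have hac : (c : ℕ) + 1 < a := by
        have := Fin.val_ne_of_ne ha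
        simp only [Fin.lt_def, Fin.val_castSucc, Fin.val_succ] at hlt this
        omega
      simp [hX.hessenberg a c hac, hY.hessenberg a c hac]
  have hnext : (S c.succ c : ℂ) • Xᵀ c.succ = (R c.succ c : ℂ) • Yᵀ c.succ := by
    have := hX.mulVec_col c
    rw [hprev _ le_rfl, hY.mulVec_col c, Fintype.sum_eq_add_sum_compl c.succ,
      Fintype.sum_eq_add_sum_compl c.succ,
      Finset.sum_congr rfl fun a ha => hcoef a (by simpa using ha)] at this
    exact (add_right_cancel this).symm
  exact eq_of_ofReal_smul_eq_ofReal_smul (hX.subdiag_pos c) (hY.subdiag_pos c)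
    (hX.star_col_dotProduct_col _) (hY.star_col_dotProduct_col _) hnext

theorem hessenberg_eq_of_col_zero_eq (hX : IsArnoldi M X S) (hY : IsArnoldi M Y R)
    (h0 : Xᵀ 0 = Yᵀ 0) : S = R := by
  have hS := conjTranspose_mul_mul_submatrix_eq hX.orthonormal hX.rel
  rw [hX.eq_of_col_zero_eq hY h0, conjTranspose_mul_mul_submatrix_eq hY.orthonormal hY.rel] at hS
  exact Matrix.map_injective Complex.ofReal_injective hS.symm

end IsArnoldi

lemma arnoldi_apply_eq_zero_of_band {N k : ℕ} {M : Matrix (Fin N) (Fin N) ℂ}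
    {U : Matrix (Fin N) (Fin (k + 1)) ℂ} {S : Matrix (Fin (k + 1)) (Fin k) ℝ} (p : Fin N)
    (hM : ∀ i j : Fin N, |(j : ℤ) - p| < k → 1 < |(i : ℤ) - j| → M i j = 0)
    (hU0 : Uᵀ 0 = Pi.single p 1)
    (hS : ∀ (i : Fin (k + 1)) (j : Fin k), (j : ℕ) + 1 < i → S i j = 0)
    (hpos : ∀ j, 0 < S j.succ j)
    (hrel : M * U.submatrix id Fin.castSucc = U * S.map (fun x => (x : ℂ)))
    (c : Fin (k + 1)) (i : Fin N) (hi : (c : ℤ) < |(i : ℤ) - p|) : U i c = 0 := by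
  induction c using WellFoundedLT.induction generalizing i with
  | _ c ih =>
  obtain rfl | ⟨c, rfl⟩ := Fin.eq_zero_or_eq_succ c
  · have hip : i ≠ p := by rintro rfl; simp at hi
    simpa [hip] using congrFun hU0 i
  simp only [Fin.val_succ, Nat.cast_add, Nat.cast_one] at hi
  have hsum := congrFun₂ hrel i c
  simp only [mul_apply, submatrix_apply, id, map_apply] at hsum
  rw [Finset.sum_eq_zero, Fintype.sum_eq_single c.succ] at hsum
  · have hsubdiag : (S c.succ c : ℂ) ≠ 0 := Complex.ofReal_ne_zero.2 (hpos c).ne'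
    exact (mul_eq_zero.1 hsum.symm).resolve_right hsubdiag
  · intro a ha
    rcases le_or_gt a c.castSucc with hle | hlt
    · have : (a : ℕ) ≤ c := hle
      rw [ih a (hle.trans_lt Fin.castSucc_lt_succ) i (by omega), zero_mul]
    · have hac : (c : ℕ) + 1 < a := by
        have := Fin.val_ne_of_ne ha
        simp only [Fin.lt_def, Fin.val_castSucc, Fin.val_succ] at hlt this
        omega
      simp [hS a c hac]
  · intro j _
    by_cases hj : (c : ℤ) < |(j : ℤ) - p|
    · rw [ih _ Fin.castSucc_lt_succ j (by simpa using hj), mul_zero]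
    · have := abs_sub_le (i : ℤ) j p
      rw [hM i j (by omega) (by omega), zero_mul]

lemma mul_apply_eq_submatrix_mul_submatrix_apply {κ ρ α : Type*} [Fintype κ]
    [NonUnitalNonAssocSemiring α] {e : κ → ι} (he : Function.Injective e) (V : Matrix ρ ι α)
    (T : Matrix ι ι α) (r : ρ) (j : κ) (h : ∀ p ∉ Set.range e, T p (e j) = 0) :
    (V * T) r (e j) = (V.submatrix id e * T.submatrix e e) r j :=
  (Fintype.sum_of_injective e he _ _ (fun p hp => by simp [h p hp]) fun _ => rfl).symm

lemma injective_of_val_eq_add {L M o : ℕ} {e : Fin L → Fin M} (he : ∀ i, (e i : ℕ) = o + i) :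
    Function.Injective e := fun a b hab =>
  Fin.ext (by have := congrArg Fin.val hab; rw [he, he] at this; omega)

section Window

variable {N : ℕ} {A : Matrix ι ι ℂ} {V : Matrix ι (Fin (N + 1)) ℂ}
  {Tbar : Matrix (Fin (N + 1)) (Fin N) ℝ}

lemma conjTranspose_mul_mul_apply_eq_zero (hV : Vᴴ * V = 1)
    (hrel : A * V.submatrix id Fin.castSucc = V * Tbar.map (fun x => (x : ℂ)))
    (htri : ∀ (p : Fin (N + 1)) (q : Fin N), 1 < |(p : ℤ) - q| → Tbar p q = 0)
    (p q : Fin (N + 1)) (hq : (q : ℕ) < N) (hpq : 1 < |(p : ℤ) - q|) : (Vᴴ * A * V) p q = 0 := by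
  have h := congrFun₂ (conjTranspose_mul_mul_submatrix_eq hV hrel) p ⟨q, hq⟩
  rw [map_apply, htri p ⟨q, hq⟩ hpq, Complex.ofReal_zero] at h
  exact h

lemma mul_apply_castSucc (hV : Vᴴ * V = 1)
    (hrel : A * V.submatrix id Fin.castSucc = V * Tbar.map (fun x => (x : ℂ)))
    (r : ι) (q : Fin N) : (A * V) r q.castSucc = (V * (Vᴴ * A * V)) r q.castSucc := by
  have h := congrFun₂ hrel r q
  rw [← conjTranspose_mul_mul_submatrix_eq hV hrel] at h
  exact h

lemma mul_submatrix_apply_of_window {L o : ℕ} {e : Fin L → Fin (N + 1)}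
    (he : ∀ i, (e i : ℕ) = o + i) (hV : Vᴴ * V = 1)
    (hrel : A * V.submatrix id Fin.castSucc = V * Tbar.map (fun x => (x : ℂ)))
    (htri : ∀ (p : Fin (N + 1)) (q : Fin N), 1 < |(p : ℤ) - q| → Tbar p q = 0)
    (r : ι) (j : Fin L) (hj : 0 < (j : ℕ) ∧ (j : ℕ) + 1 < L) :
    (A * V.submatrix id e) r j = (V.submatrix id e * (Vᴴ * A * V).submatrix e e) r j := by
  have hlast : (e ⟨j + 1, hj.2⟩ : ℕ) = o + (j + 1) := he _
  have hq : (e j : ℕ) < N := by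
    have := (e ⟨j + 1, hj.2⟩).isLt
    rw [hlast] at this
    rw [he]
    omega
  calc (A * V.submatrix id e) r j = (A * V) r (Fin.castSucc ⟨e j, hq⟩) := rfl
    _ = (V * (Vᴴ * A * V)) r (e j) := mul_apply_castSucc hV hrel r _
    _ = _ := by
      refine mul_apply_eq_submatrix_mul_submatrix_apply (injective_of_val_eq_add he) V _ r j
        fun p hp => ?_
      have hp' : (p : ℕ) < o ∨ o + L ≤ p := by
        by_contra! hin
        exact hp ⟨⟨p - o, by omega⟩, Fin.ext (by rw [he, Fin.val_mk]; omega)⟩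
      refine conjTranspose_mul_mul_apply_eq_zero hV hrel htri p (e j) hq ?_
      rw [he, lt_abs, neg_sub]
      omega

theorem IsArnoldi.of_window {k L o : ℕ} {e : Fin L → Fin (N + 1)}
    (he : ∀ i, (e i : ℕ) = o + i) (hV : Vᴴ * V = 1)
    (hrel : A * V.submatrix id Fin.castSucc = V * Tbar.map (fun x => (x : ℂ)))
    (htri : ∀ (p : Fin (N + 1)) (q : Fin N), 1 < |(p : ℤ) - q| → Tbar p q = 0)
    {U : Matrix (Fin L) (Fin (k + 1)) ℂ} {S : Matrix (Fin (k + 1)) (Fin k) ℝ}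
    (hU : IsArnoldi ((Vᴴ * A * V).submatrix e e) U S)
    (hsupp : ∀ j (c : Fin k), U j c.castSucc ≠ 0 → 0 < (j : ℕ) ∧ (j : ℕ) + 1 < L) :
    IsArnoldi A (V.submatrix id e * U) S where
  orthonormal := by
    have hVe : (V.submatrix id e)ᴴ * V.submatrix id e = 1 := by
      rw [conjTranspose_submatrix, ← submatrix_mul _ _ _ _ _ Function.bijective_id, hV,
        submatrix_one _ (injective_of_val_eq_add he)]
    rw [conjTranspose_mul, Matrix.mul_assoc, ← Matrix.mul_assoc _ _ U, hVe, Matrix.one_mul,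
      hU.orthonormal]
  hessenberg := hU.hessenberg
  subdiag_pos := hU.subdiag_pos
  rel := by
    have hcols : A * V.submatrix id e * U.submatrix id Fin.castSucc =
        V.submatrix id e * (Vᴴ * A * V).submatrix e e * U.submatrix id Fin.castSucc := by
      ext r c
      rw [mul_apply, mul_apply]
      refine Finset.sum_congr rfl fun j _ => ?_
      by_cases hjc : U j c.castSucc = 0
      · simp [hjc]
      · rw [mul_submatrix_apply_of_window he hV hrel htri r j (hsupp j c hjc)]
    calc A * (V.submatrix id e * U).submatrix id Fin.castSucc
        = A * V.submatrix id e * U.submatrix id Fin.castSucc := by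
          rw [Matrix.mul_assoc]; rfl
      _ = V.submatrix id e * U * S.map (fun x => (x : ℂ)) := by
          rw [hcols, Matrix.mul_assoc, hU.rel, Matrix.mul_assoc]

end Window

end General

/-- Lanczos restart recovery: let `A V_{m+k} = V_{m+k+1} T̄_{m+k}` be the primary Lanczos
relation and `A V^rr_k = V^rr_{k+1} T̄^rr_k` the restarted Lanczos relation starting with
`v^rr₁ = v_{m+1}`. With `m + 1 > k`, let `T̂_{2k+1}` be the trailing `(2k+1) × (2k+1)`
principal submatrix of `T_{m+k+1} = V_{m+k+1}ᴴ A V_{m+k+1}`. Then the tridiagonal matrix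
produced by `k` steps of the Lanczos process for `T̂_{2k+1}` with starting vector
`e_{k+1} ∈ ℂ^{2k+1}` equals `T̄^rr_k` (by essential uniqueness, any such Lanczos relation
for `T̂_{2k+1}` has its tridiagonal matrix equal to `T̄^rr_k`). -/
theorem stmt17 {n m k : ℕ} (hmk : k < m + 1)
    (A : Matrix (Fin n) (Fin n) ℂ)
    -- primary Lanczos relation
    (V : Matrix (Fin n) (Fin (m + k + 1)) ℂ) (hV : Vᴴ * V = 1)
    (Tbar : Matrix (Fin (m + k + 1)) (Fin (m + k)) ℝ)
    (hTtri : ∀ (i : Fin (m + k + 1)) (j : Fin (m + k)),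
      ((i : ℤ) - (j : ℤ) > 1 ∨ (j : ℤ) - (i : ℤ) > 1) → Tbar i j = 0)
    (hVrel : A * V.submatrix id Fin.castSucc = V * Tbar.map (fun x => (x : ℂ)))
    -- restarted Lanczos relation, starting vector v^rr₁ = v_{m+1}
    (W : Matrix (Fin n) (Fin (k + 1)) ℂ) (hW : Wᴴ * W = 1)
    (hWcol : (fun i => W i ⟨0, by omega⟩) = fun i => V i ⟨m, by omega⟩)
    (Sbar : Matrix (Fin (k + 1)) (Fin k) ℝ)
    (hStri : ∀ (i : Fin (k + 1)) (j : Fin k),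
      ((i : ℤ) - (j : ℤ) > 1 ∨ (j : ℤ) - (i : ℤ) > 1) → Sbar i j = 0)
    (hSpos : ∀ j : Fin k, 0 < Sbar j.succ j)
    (hWrel : A * W.submatrix id Fin.castSucc = W * Sbar.map (fun x => (x : ℂ))) :
    -- the trailing (2k+1) × (2k+1) principal submatrix of T_{m+k+1} = Vᴴ A V
    let emb : Fin (2 * k + 1) → Fin (m + k + 1) :=
      fun i => ⟨m - k + (i : ℕ), by have := i.isLt; omega⟩
    let That : Matrix (Fin (2 * k + 1)) (Fin (2 * k + 1)) ℂ :=
      (Vᴴ * A * V).submatrix emb emb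
    -- any k-step Lanczos relation for T̂ with starting vector e_{k+1} has
    -- its tridiagonal matrix equal to T̄^rr_k = Sbar
    ∀ (U : Matrix (Fin (2 * k + 1)) (Fin (k + 1)) ℂ), Uᴴ * U = 1 →
      (fun i => U i ⟨0, by omega⟩) = Pi.single (⟨k, by omega⟩ : Fin (2 * k + 1)) (1 : ℂ) →
      ∀ (Shat : Matrix (Fin (k + 1)) (Fin k) ℝ),
        (∀ (i : Fin (k + 1)) (j : Fin k),
          ((i : ℤ) - (j : ℤ) > 1 ∨ (j : ℤ) - (i : ℤ) > 1) → Shat i j = 0) →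
        (∀ j : Fin k, 0 < Shat j.succ j) →
        That * U.submatrix id Fin.castSucc = U * Shat.map (fun x => (x : ℂ)) →
        Shat = Sbar := by
  intro emb That U hU hU0 Shat hShtri hShpos hUrel
  have hemb : ∀ i, (emb i : ℕ) = m - k + i := fun _ => rfl
  have hTband : ∀ (p : Fin (m + k + 1)) (q : Fin (m + k)), 1 < |(p : ℤ) - q| → Tbar p q = 0 :=
    fun p q h => hTtri p q (by rw [lt_abs, neg_sub] at h; omega)
  have hUA : IsArnoldi That U Shat :=
    ⟨hU, fun i j h => hShtri i j (Or.inl (by omega)), hShpos, hUrel⟩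
  have hWA : IsArnoldi A W Sbar :=
    ⟨hW, fun i j h => hStri i j (Or.inl (by omega)), hSpos, hWrel⟩
  have hThat : ∀ i j : Fin (2 * k + 1), |(j : ℤ) - k| < k → 1 < |(i : ℤ) - j| →
      That i j = 0 := by
    intro i j hj hij
    refine conjTranspose_mul_mul_apply_eq_zero hV hVrel hTband (emb i) (emb j) ?_ ?_
    · rw [abs_lt] at hj
      rw [hemb]
      omega
    · rw [hemb, hemb]
      push_cast [Nat.cast_sub (show k ≤ m by omega)]
      convert hij using 2
      ring
  have hsupp := arnoldi_apply_eq_zero_of_band ⟨k, by omega⟩ hThat hU0 hUA.hessenberg hShpos hUrel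
  have hlift : IsArnoldi A (V.submatrix id emb * U) Shat :=
    hUA.of_window hemb hV hVrel hTband fun j c hjc => by
      by_contra hj
      refine hjc (hsupp _ j ?_)
      rw [lt_abs, neg_sub]
      simp only [Fin.val_castSucc]
      omega
  refine hlift.hessenberg_eq_of_col_zero_eq hWA ?_
  ext r
  have hmid : emb ⟨k, by omega⟩ = ⟨m, by omega⟩ := Fin.ext (by simp only [hemb]; omega)
  calc (V.submatrix id emb * U)ᵀ 0 r
      = (V.submatrix id emb *ᵥ Pi.single ⟨k, by omega⟩ 1) r := by rw [← hU0]; rfl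
    _ = V r ⟨m, by omega⟩ := by rw [mulVec_single_one, ← hmid]; rfl
    _ = W r 0 := (congrFun hWcol r).symm
end

section
/- Error formula for rational Lanczos approximation: let f(t) = Σᵢ ωᵢ/(t − σᵢ) and for each i let x_m^{(i)} satisfy b − (A − σᵢ I) x_m^{(i)} = ρ_m^{(i)} v_{m+1} for a common unit vector v_{m+1}. Then f(A)b − Σᵢ ωᵢ x_m^{(i)} = g_m(A) v_{m+1} where g_m(t) = Σᵢ ωᵢ ρ_m^{(i)}/(t − σᵢ); consequently ‖f(A)b − Σᵢ ωᵢ x_m^{(i)}‖₂² = v_{m+1}^H h_m(A) v_{m+1} with h_m = |g_m|². -/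
open Matrix

section ShiftedSystems

variable {n ι α : Type*} [Fintype n] [DecidableEq n] [Fintype ι] [CommRing α]

theorem inv_mulVec_sub_eq_smul_of_sub_mulVec_eq {M : Matrix n n α} (hM : IsUnit M)
    {b x v : n → α} {c : α} (h : b - M *ᵥ x = c • v) :
    M⁻¹ *ᵥ b - x = c • (M⁻¹ *ᵥ v) := by
  have hinv : M⁻¹ * M = 1 := nonsing_inv_mul M ((isUnit_iff_isUnit_det M).mp hM)
  rw [← mulVec_smul, ← h, mulVec_sub, mulVec_mulVec, hinv, one_mulVec]

theorem sum_smul_inv_mulVec_sub_sum_smul {M : ι → Matrix n n α} (hM : ∀ i, IsUnit (M i))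
    {b v : n → α} {x : ι → n → α} {ω ρ : ι → α} (h : ∀ i, b - M i *ᵥ x i = ρ i • v) :
    (∑ i, ω i • (M i)⁻¹) *ᵥ b - ∑ i, ω i • x i = (∑ i, (ω i * ρ i) • (M i)⁻¹) *ᵥ v := by
  simp only [sum_mulVec, smul_mulVec, ← Finset.sum_sub_distrib, ← smul_sub, mul_smul,
    inv_mulVec_sub_eq_smul_of_sub_mulVec_eq (hM _) (h _)]

end ShiftedSystems

theorem star_dotProduct_conjTranspose_mul_self_mulVec {m n α : Type*} [Fintype m] [Fintype n]
    [CommSemiring α] [StarRing α] (g : Matrix m n α) (v : n → α) :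
    star v ⬝ᵥ (gᴴ * g) *ᵥ v = star (g *ᵥ v) ⬝ᵥ g *ᵥ v := by
  rw [← mulVec_mulVec, dotProduct_mulVec, star_mulVec]

theorem ofReal_norm_toLp_sq {𝕜 n : Type*} [RCLike 𝕜] [Fintype n] (e : n → 𝕜) :
    ((‖WithLp.toLp 2 e‖ ^ 2 : ℝ) : 𝕜) = star e ⬝ᵥ e := by
  rw [RCLike.ofReal_pow, ← inner_self_eq_norm_sq_to_K, EuclideanSpace.inner_toLp_toLp,
    dotProduct_comm]

theorem stmt18_general {n p : ℕ} (A : Matrix (Fin n) (Fin n) ℂ)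
    (b v : Fin n → ℂ)
    (σ ω ρ : Fin p → ℂ)
    (hinv : ∀ i, IsUnit (A - σ i • (1 : Matrix (Fin n) (Fin n) ℂ)))
    (x : Fin p → Fin n → ℂ)
    (hres : ∀ i, b - (A - σ i • 1).mulVec (x i) = ρ i • v) :
    let err : Fin n → ℂ :=
      (∑ i, ω i • (A - σ i • (1 : Matrix (Fin n) (Fin n) ℂ))⁻¹).mulVec b - ∑ i, ω i • x i
    let g : Matrix (Fin n) (Fin n) ℂ :=
      ∑ i, (ω i * ρ i) • (A - σ i • (1 : Matrix (Fin n) (Fin n) ℂ))⁻¹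
    err = g.mulVec v ∧
      ((Real.sqrt (∑ r, ‖err r‖ ^ 2) ^ 2 : ℝ) : ℂ) = star v ⬝ᵥ (gᴴ * g).mulVec v := by
  intro err g
  have herr : err = g *ᵥ v := sum_smul_inv_mulVec_sub_sum_smul hinv hres
  refine ⟨herr, ?_⟩
  rw [star_dotProduct_conjTranspose_mul_self_mulVec, ← herr, ← ofReal_norm_toLp_sq,
    EuclideanSpace.norm_eq]
  rfl

/-- Error formula for the rational Lanczos approximation: with `f(A)b = Σᵢ ωᵢ (A−σᵢI)⁻¹b`
and `b − (A−σᵢI)xᵢ = ρᵢ v` for a common unit vector `v`, the error satisfies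
`f(A)b − Σᵢ ωᵢ xᵢ = g(A) v` where `g(A) = Σᵢ ωᵢρᵢ (A−σᵢI)⁻¹`, and consequently
`‖f(A)b − Σᵢ ωᵢ xᵢ‖₂² = vᴴ (g(A)ᴴ g(A)) v`. -/
theorem stmt18 {n p : ℕ} (A : Matrix (Fin n) (Fin n) ℂ) (hA : A.IsHermitian)
    (b v : Fin n → ℂ) (hv : star v ⬝ᵥ v = 1)
    (σ ω ρ : Fin p → ℂ)
    (hinv : ∀ i, IsUnit (A - σ i • (1 : Matrix (Fin n) (Fin n) ℂ)))
    (x : Fin p → Fin n → ℂ)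
    (hres : ∀ i, b - (A - σ i • 1).mulVec (x i) = ρ i • v) :
    let err : Fin n → ℂ :=
      (∑ i, ω i • (A - σ i • (1 : Matrix (Fin n) (Fin n) ℂ))⁻¹).mulVec b - ∑ i, ω i • x i
    let g : Matrix (Fin n) (Fin n) ℂ :=
      ∑ i, (ω i * ρ i) • (A - σ i • (1 : Matrix (Fin n) (Fin n) ℂ))⁻¹
    err = g.mulVec v ∧
      ((Real.sqrt (∑ r, ‖err r‖ ^ 2) ^ 2 : ℝ) : ℂ) = star v ⬝ᵥ (gᴴ * g).mulVec v :=
  stmt18_general A b v σ ω ρ hinv x hres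
end

section
/- Monotonicity of Gauss quadrature for t^{-1}: let A be Hermitian positive definite and T_m = V_m^H A V_m the tridiagonal matrices from the Lanczos process started with v_1 = b/‖b‖. Then the scalars e_1^H T_m^{-1} e_1 are positive and increase monotonically with m, and e_1^H T_n^{-1} e_1 = (1/‖b‖²) b^H A^{-1} b at termination step n; hence ‖b‖²(e_1^H T_{m+k}^{-1} e_1 − e_1^H T_m^{-1} e_1) is a lower bound for ‖x_* − x_m‖_A², where x_m = ‖b‖ V_m T_m^{-1} e_1 and x_* = A^{-1}b. -/
/-!
Write `K = Wᴴ S W` for the compression of a positive definite `S` to the range of an injective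
`W`. The Galerkin approximation `x = W K⁻¹ Wᴴ c` of `x_* = S⁻¹ c` is the `S`-orthogonal projection
of `x_*` onto that range, so `‖x_* - x‖_S² = cᴴ S⁻¹ c - (Wᴴ c)ᴴ K⁻¹ (Wᴴ c) ≥ 0`.

For Lanczos, `Tₘ = Vₘᴴ A Vₘ` and `Vₘᴴ b = ‖b‖ e₁`. Since `Tₘ` is also the leading principal
submatrix of `T_{m'}` for `m ≤ m'`, the inequality with `S = T_{m'}` and `c = e₁` gives
`(Tₘ⁻¹)₁₁ ≤ (T_{m'}⁻¹)₁₁`. At termination `A V = V T_N`, hence `Vᴴ A⁻¹ V = T_N⁻¹`, which gives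
`‖b‖² (T_N⁻¹)₁₁ = bᴴ A⁻¹ b`. The identity with `S = A`, `W = Vₘ`, `c = b` then reads
`‖x_* - xₘ‖_A² = ‖b‖² ((T_N⁻¹)₁₁ - (Tₘ⁻¹)₁₁)`, and monotonicity bounds this from below.
-/

open Matrix
open scoped ComplexOrder

namespace Matrix

variable {ι κ μ R : Type*} [Fintype ι]

section CommRing

variable [CommRing R]

theorem mulVec_nonsing_inv_mulVec [DecidableEq ι] {S : Matrix ι ι R} (hS : IsUnit S)
    (v : ι → R) : S *ᵥ (S⁻¹ *ᵥ v) = v := by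
  rw [mulVec_mulVec, mul_nonsing_inv _ ((isUnit_iff_isUnit_det S).mp hS), one_mulVec]

variable [StarRing R]

theorem conjTranspose_submatrix_id_mul_mul (M : Matrix ι μ R) (S : Matrix ι ι R) (f : κ → μ) :
    (M.submatrix id f)ᴴ * S * M.submatrix id f = (Mᴴ * S * M).submatrix f f :=
  rfl

theorem conjTranspose_submatrix_id_mulVec (M : Matrix ι μ R) (f : κ → μ) (v : ι → R) :
    (M.submatrix id f)ᴴ *ᵥ v = (Mᴴ *ᵥ v) ∘ f :=
  rfl

theorem conjTranspose_submatrix_id_mul_self [DecidableEq κ] [DecidableEq μ] {M : Matrix ι μ R}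
    (hM : Mᴴ * M = 1) {f : κ → μ} (hf : Function.Injective f) :
    (M.submatrix id f)ᴴ * M.submatrix id f = 1 := by
  change (Mᴴ * M).submatrix f f = 1
  rw [hM, submatrix_one f hf]

theorem star_dotProduct_mulVec_eq (S : Matrix ι ι R) (x y : ι → R) :
    star x ⬝ᵥ S *ᵥ y = star (Sᴴ *ᵥ x) ⬝ᵥ y := by
  rw [dotProduct_mulVec, star_mulVec, conjTranspose_conjTranspose]

theorem star_single_one_dotProduct_mulVec_single_one [DecidableEq ι] (S : Matrix ι ι R)
    (i j : ι) : star (Pi.single i 1) ⬝ᵥ S *ᵥ Pi.single j 1 = S i j := by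
  simp

variable [Fintype κ]

theorem mulVec_injective_of_conjTranspose_mul_self [DecidableEq κ] {W : Matrix ι κ R}
    (hW : Wᴴ * W = 1) : Function.Injective W.mulVec :=
  Function.LeftInverse.injective (g := (Wᴴ *ᵥ ·)) fun x => by
    simp only [mulVec_mulVec, hW, one_mulVec]

theorem star_dotProduct_conjTranspose_mul_mul_mulVec (M : Matrix ι κ R) (S : Matrix ι ι R)
    (x y : κ → R) : star x ⬝ᵥ (Mᴴ * S * M) *ᵥ y = star (M *ᵥ x) ⬝ᵥ S *ᵥ (M *ᵥ y) := by
  simp only [star_mulVec, dotProduct_mulVec, vecMul_vecMul, mulVec_mulVec, Matrix.mul_assoc]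

theorem galerkin_error [DecidableEq ι] [DecidableEq κ] {S : Matrix ι ι R} (hS : S.IsHermitian)
    (hSu : IsUnit S) {W : Matrix ι κ R} (hK : IsUnit (Wᴴ * S * W)) (c : ι → R) :
    star (S⁻¹ *ᵥ c - W *ᵥ ((Wᴴ * S * W)⁻¹ *ᵥ (Wᴴ *ᵥ c))) ⬝ᵥ
        S *ᵥ (S⁻¹ *ᵥ c - W *ᵥ ((Wᴴ * S * W)⁻¹ *ᵥ (Wᴴ *ᵥ c))) =
      star c ⬝ᵥ S⁻¹ *ᵥ c - star (Wᴴ *ᵥ c) ⬝ᵥ (Wᴴ * S * W)⁻¹ *ᵥ (Wᴴ *ᵥ c) := by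
  set u := (Wᴴ * S * W)⁻¹ *ᵥ (Wᴴ *ᵥ c)
  have hc : S *ᵥ (S⁻¹ *ᵥ c) = c := mulVec_nonsing_inv_mulVec hSu c
  have hu : (Wᴴ * S * W) *ᵥ u = Wᴴ *ᵥ c := mulVec_nonsing_inv_mulVec hK _
  have h₁ : star (S⁻¹ *ᵥ c) ⬝ᵥ S *ᵥ (S⁻¹ *ᵥ c) = star c ⬝ᵥ S⁻¹ *ᵥ c := by
    rw [star_dotProduct_mulVec_eq, hS.eq, hc]
  have h₂ : star (S⁻¹ *ᵥ c) ⬝ᵥ S *ᵥ (W *ᵥ u) = star (Wᴴ *ᵥ c) ⬝ᵥ u := by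
    rw [star_dotProduct_mulVec_eq, hS.eq, hc, dotProduct_mulVec, star_mulVec,
      conjTranspose_conjTranspose]
  have h₃ : star (W *ᵥ u) ⬝ᵥ S *ᵥ (S⁻¹ *ᵥ c) = star u ⬝ᵥ Wᴴ *ᵥ c := by
    rw [hc, star_mulVec, ← dotProduct_mulVec]
  have h₄ : star (W *ᵥ u) ⬝ᵥ S *ᵥ (W *ᵥ u) = star u ⬝ᵥ Wᴴ *ᵥ c := by
    rw [← hu, star_mulVec, ← dotProduct_mulVec]
    simp only [mulVec_mulVec, Matrix.mul_assoc]
  simp only [mulVec_sub, star_sub, sub_dotProduct, dotProduct_sub, h₁, h₂, h₃, h₄]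
  ring

theorem galerkin_error_of_conjTranspose_mulVec_eq_smul [DecidableEq ι] [DecidableEq κ]
    {S : Matrix ι ι R} (hS : S.IsHermitian) (hSu : IsUnit S) {W : Matrix ι κ R}
    (hK : IsUnit (Wᴴ * S * W)) {c : ι → R} {a : R} {e : κ → R} (hc : Wᴴ *ᵥ c = a • e) :
    star (S⁻¹ *ᵥ c - a • W *ᵥ ((Wᴴ * S * W)⁻¹ *ᵥ e)) ⬝ᵥ
        S *ᵥ (S⁻¹ *ᵥ c - a • W *ᵥ ((Wᴴ * S * W)⁻¹ *ᵥ e)) =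
      star c ⬝ᵥ S⁻¹ *ᵥ c - star a * a * (star e ⬝ᵥ (Wᴴ * S * W)⁻¹ *ᵥ e) := by
  have := galerkin_error hS hSu hK c
  rwa [hc, mulVec_smul, mulVec_smul, star_smul, smul_dotProduct, dotProduct_smul, smul_eq_mul,
    smul_eq_mul, ← mul_assoc] at this

theorem conjTranspose_mul_inv_mul_of_mul_eq [DecidableEq ι] [DecidableEq κ] {A : Matrix ι ι R}
    {V : Matrix ι κ R} {T : Matrix κ κ R} (hV : Vᴴ * V = 1) (hA : IsUnit A) (hT : IsUnit T)
    (hAV : A * V = V * T) : Vᴴ * A⁻¹ * V = T⁻¹ := by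
  have hA' := (isUnit_iff_isUnit_det A).mp hA
  have hT' := (isUnit_iff_isUnit_det T).mp hT
  have hinv : A⁻¹ * V = V * T⁻¹ := by
    calc A⁻¹ * V = A⁻¹ * (V * T * T⁻¹) := by rw [mul_nonsing_inv_cancel_right T V hT']
      _ = V * T⁻¹ := by rw [← hAV, Matrix.mul_assoc A, nonsing_inv_mul_cancel_left A _ hA']
  rw [Matrix.mul_assoc, hinv, ← Matrix.mul_assoc, hV, Matrix.one_mul]

theorem star_mulVec_dotProduct_inv_mulVec_of_mul_eq [DecidableEq ι] [DecidableEq κ]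
    {A : Matrix ι ι R} {V : Matrix ι κ R} {T : Matrix κ κ R} (hV : Vᴴ * V = 1) (hA : IsUnit A)
    (hT : IsUnit T) (hAV : A * V = V * T) (x : κ → R) :
    star (V *ᵥ x) ⬝ᵥ A⁻¹ *ᵥ (V *ᵥ x) = star x ⬝ᵥ T⁻¹ *ᵥ x := by
  rw [← star_dotProduct_conjTranspose_mul_mul_mulVec,
    conjTranspose_mul_inv_mul_of_mul_eq hV hA hT hAV]

end CommRing

section Field

variable {K : Type*} [Field K] [PartialOrder K] [StarRing K] [StarOrderedRing K]
  [Fintype κ] [DecidableEq ι] [DecidableEq κ]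

theorem PosDef.star_dotProduct_inv_conjTranspose_mul_mul_le {S : Matrix ι ι K} (hS : S.PosDef)
    {W : Matrix ι κ K} (hW : Function.Injective W.mulVec) (c : ι → K) :
    star (Wᴴ *ᵥ c) ⬝ᵥ (Wᴴ * S * W)⁻¹ *ᵥ (Wᴴ *ᵥ c) ≤ star c ⬝ᵥ S⁻¹ *ᵥ c := by
  rw [← sub_nonneg, ← galerkin_error hS.isHermitian hS.isUnit
    (hS.conjTranspose_mul_mul_same hW).isUnit c]
  exact hS.posSemidef.dotProduct_mulVec_nonneg _

theorem PosDef.inv_submatrix_apply_le {S : Matrix ι ι K} (hS : S.PosDef) {f : κ → ι}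
    (hf : Function.Injective f) (j : κ) : (S.submatrix f f)⁻¹ j j ≤ S⁻¹ (f j) (f j) := by
  set P := (1 : Matrix ι ι K).submatrix id f
  have hP : Pᴴ * S * P = S.submatrix f f := by
    rw [conjTranspose_submatrix_id_mul_mul, conjTranspose_one, Matrix.one_mul, Matrix.mul_one]
  have hPe : Pᴴ *ᵥ Pi.single (f j) 1 = Pi.single j 1 := by
    rw [conjTranspose_submatrix_id_mulVec, conjTranspose_one, one_mulVec]
    ext i
    simp [Pi.single_apply, hf.eq_iff]
  have hPP : Pᴴ * P = 1 :=
    conjTranspose_submatrix_id_mul_self (by rw [conjTranspose_one, Matrix.one_mul]) hf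
  have := hS.star_dotProduct_inv_conjTranspose_mul_mul_le
    (mulVec_injective_of_conjTranspose_mul_self hPP) (Pi.single (f j) 1)
  rwa [hPe, hP, star_single_one_dotProduct_mulVec_single_one,
    star_single_one_dotProduct_mulVec_single_one] at this

end Field

end Matrix

/-- Monotonicity of Gauss quadrature for `t⁻¹`: with `Tₘ = Vₘᴴ A Vₘ` the tridiagonal
matrices from the Lanczos process started with `v₁ = b/‖b‖` (terminating at step `N`,
i.e. `A V_N = V_N T_N`), the scalars `e₁ᴴ Tₘ⁻¹ e₁` are positive reals increasing with `m`,
`e₁ᴴ T_N⁻¹ e₁ = bᴴ A⁻¹ b / ‖b‖²`, and hence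
`‖b‖² (e₁ᴴ T_{m+k}⁻¹ e₁ − e₁ᴴ Tₘ⁻¹ e₁) ≤ ‖x_* − xₘ‖_A²` with
`xₘ = ‖b‖ Vₘ Tₘ⁻¹ e₁` and `x_* = A⁻¹ b`. -/
theorem stmt19 {n N : ℕ} (hN : 0 < N)
    (A : Matrix (Fin n) (Fin n) ℂ) (hA : A.PosDef)
    (b : Fin n → ℂ) (hb : b ≠ 0)
    (V : Matrix (Fin n) (Fin N) ℂ) (hV : Vᴴ * V = 1)
    (hcol0 : (fun i => V i ⟨0, hN⟩) = (((Real.sqrt (∑ i, ‖b i‖ ^ 2))⁻¹ : ℝ) : ℂ) • b)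
    (hterm : A * V = V * (Vᴴ * A * V)) :
    let nb : ℝ := Real.sqrt (∑ i, ‖b i‖ ^ 2)
    let T : (m : ℕ) → m ≤ N → Matrix (Fin m) (Fin m) ℂ := fun m hm =>
      (Vᴴ * A * V).submatrix (Fin.castLE hm) (Fin.castLE hm)
    let φ : (m : ℕ) → 0 < m → m ≤ N → ℂ := fun m h0 hm =>
      (Pi.single (⟨0, h0⟩ : Fin m) (1 : ℂ) : Fin m → ℂ) ⬝ᵥ
        (T m hm)⁻¹.mulVec (Pi.single (⟨0, h0⟩ : Fin m) (1 : ℂ))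
    (∀ m (h0 : 0 < m) (hm : m ≤ N), 0 < (φ m h0 hm).re ∧ (φ m h0 hm).im = 0) ∧
    (∀ m m' (h0 : 0 < m) (h0' : 0 < m') (hm : m ≤ N) (hm' : m' ≤ N),
      m ≤ m' → (φ m h0 hm).re ≤ (φ m' h0' hm').re) ∧
    (φ N hN le_rfl = (star b ⬝ᵥ A⁻¹.mulVec b) / ((nb : ℂ) * nb)) ∧
    (∀ m k (h0 : 0 < m) (hmk : m + k ≤ N),
      let hmN : m ≤ N := by omega
      let xm : Fin n → ℂ := (nb : ℂ) •
        (V.submatrix id (Fin.castLE hmN)).mulVec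
          ((T m hmN)⁻¹.mulVec (Pi.single (⟨0, h0⟩ : Fin m) (1 : ℂ)))
      let errA2 : ℝ :=
        (star (A⁻¹.mulVec b - xm) ⬝ᵥ A.mulVec (A⁻¹.mulVec b - xm)).re
      nb ^ 2 * ((φ (m + k) (by omega) hmk).re - (φ m h0 hmN).re) ≤ errA2) := by
  intro nb T φ
  have hnb : 0 < nb := by
    rw [show nb = ‖WithLp.toLp 2 b‖ from (EuclideanSpace.norm_eq _).symm]
    simpa using hb
  have hTpd (m : ℕ) (hm : m ≤ N) : (T m hm).PosDef :=
    hA.conjTranspose_mul_mul_same <| mulVec_injective_of_conjTranspose_mul_self <|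
      conjTranspose_submatrix_id_mul_self hV (Fin.castLE_injective hm)
  have hφ (m : ℕ) (h0 : 0 < m) (hm : m ≤ N) : φ m h0 hm = (T m hm)⁻¹ ⟨0, h0⟩ ⟨0, h0⟩ := by
    simp [φ]
  have hmono (m m' : ℕ) (h0 : 0 < m) (h0' : 0 < m') (hm : m ≤ N) (hm' : m' ≤ N)
      (hmm' : m ≤ m') : φ m h0 hm ≤ φ m' h0' hm' := by
    rw [hφ, hφ]
    exact (hTpd m' hm').inv_submatrix_apply_le (Fin.castLE_injective hmm') ⟨0, h0⟩
  have hb_eq : b = (nb : ℂ) • V *ᵥ Pi.single ⟨0, hN⟩ 1 := by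
    rw [mulVec_single_one, show V.col ⟨0, hN⟩ = _ from hcol0, smul_smul, ← Complex.ofReal_mul,
      mul_inv_cancel₀ hnb.ne', Complex.ofReal_one, one_smul]
  have hq : star b ⬝ᵥ A⁻¹ *ᵥ b = (nb : ℂ) * nb * φ N hN le_rfl := by
    rw [hb_eq, mulVec_smul, star_smul, smul_dotProduct, dotProduct_smul,
      star_mulVec_dotProduct_inv_mulVec_of_mul_eq hV hA.isUnit (hTpd N le_rfl).isUnit hterm,
      star_single_one_dotProduct_mulVec_single_one, hφ]
    simp [mul_assoc]
  refine ⟨fun m h0 hm => ?_, fun m m' h0 h0' hm hm' hmm' => ?_, ?_, ?_⟩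
  · have := hφ m h0 hm ▸ (hTpd m hm).inv.diag_pos (i := ⟨0, h0⟩)
    exact ⟨(Complex.pos_iff.mp this).1, (Complex.pos_iff.mp this).2.symm⟩
  · exact (Complex.le_def.mp (hmono m m' h0 h0' hm hm' hmm')).1
  · rw [hq, mul_div_cancel_left₀ _ (by exact_mod_cast (mul_pos hnb hnb).ne')]
  · intro m k h0 hmk hmN xm errA2
    set W := V.submatrix id (Fin.castLE hmN)
    have hVb : Vᴴ *ᵥ b = (nb : ℂ) • Pi.single ⟨0, hN⟩ 1 := by
      rw [hb_eq, mulVec_smul, mulVec_mulVec, hV, one_mulVec]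
    have hWb : Wᴴ *ᵥ b = (nb : ℂ) • Pi.single ⟨0, h0⟩ 1 := by
      rw [conjTranspose_submatrix_id_mulVec, hVb]
      ext i
      simp [Pi.single_apply, Fin.ext_iff]
    have herr : errA2 = nb ^ 2 * ((φ N hN le_rfl).re - (φ m h0 hmN).re) := by
      have hG := congrArg Complex.re <| galerkin_error_of_conjTranspose_mulVec_eq_smul (W := W)
        hA.isHermitian hA.isUnit (hTpd m hmN).isUnit hWb
      rw [hq, star_single_one_dotProduct_mulVec_single_one,
        show Wᴴ * A * W = T m hmN from rfl, ← hφ m h0 hmN] at hG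
      rw [show errA2 = _ from hG]
      simp
      ring
    rw [herr]
    gcongr
    exact hmono _ _ _ hN hmk le_rfl (by omega)
end
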